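/- The function g(μθ, t | x₀) = (2(μθ−x₀)/(σθ^{3/2}√π)) · e^{−t/θ} (1−e^{−2t/θ})^{−3/2} · exp( −(x₀−μθ)² e^{−2t/θ} / (σ²θ(1−e^{−2t/θ})) ) is a probability density in t on (0,∞): it is nonnegative and ∫_0^∞ g(μθ, t | x₀) dt = 1, provided x₀ < μθ. -/

import Mathlib

/-!
For the Ornstein–Uhlenbeck process `dX = (μ - X / θ) dt + σ dW` started at `x₀`, the distance of
the mean from the threshold `μθ` at time `t`, divided by `√2` times the standard deviation, is
`s(t) = c e^{-t/θ} / √(1 - e^{-2t/θ})` with `c = (μθ - x₀) / (σ√θ)`. The density is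
`|s'(t)| · (2/√π) e^{-s(t)²}`, i.e. `-d/dt erfc (s t)`, and `s` decreases from `∞` to `0` on
`(0, ∞)`; the substitution `y = s(t)` turns the integral into `∫₀^∞ (2/√π) e^{-y²} dy = 1`.
-/

open Real MeasureTheory Set

/-- Closed-form first passage time density of the OU process to the constant
threshold S = μθ. -/
noncomputable def fptDensityMuTheta (θ σ μ x₀ t : ℝ) : ℝ :=
  (2 * (μ * θ - x₀) / (σ * θ ^ ((3 : ℝ) / 2) * Real.sqrt π)) *
    (Real.exp (-t / θ) / (1 - Real.exp (-2 * t / θ)) ^ ((3 : ℝ) / 2)) *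
    Real.exp (-((x₀ - μ * θ) ^ 2 * Real.exp (-2 * t / θ)) /
      (σ ^ 2 * θ * (1 - Real.exp (-2 * t / θ))))

lemma rpow_three_halves_eq_mul_sqrt {x : ℝ} (hx : 0 ≤ x) : x ^ ((3 : ℝ) / 2) = x * √x := by
  rw [show (3 : ℝ) / 2 = 1 + 1 / 2 by norm_num, rpow_add' hx (by norm_num), rpow_one,
    sqrt_eq_rpow]

lemma exp_neg_two_mul_div (t θ : ℝ) : exp (-2 * t / θ) = exp (-t / θ) ^ 2 := by
  rw [← exp_nat_mul]
  ring_nf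

lemma one_sub_exp_neg_two_mul_div_pos {t θ : ℝ} (hθ : 0 < θ) (ht : 0 < t) :
    0 < 1 - exp (-2 * t / θ) := by
  have : -2 * t / θ < 0 := div_neg_of_neg_of_pos (by linarith) hθ
  linarith [exp_lt_one_iff.2 this]

lemma integral_Ioi_two_div_sqrt_pi_mul_exp_neg_sq :
    ∫ y in Ioi (0 : ℝ), 2 / √π * exp (-y ^ 2) = 1 := by
  have hπ : √π ≠ 0 := (sqrt_pos.2 pi_pos).ne'
  rw [integral_const_mul]
  simp only [← neg_one_mul (_ ^ 2), integral_gaussian_Ioi, div_one]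
  field_simp

noncomputable def standardizedGap (c θ t : ℝ) : ℝ :=
  c * exp (-t / θ) / √(1 - exp (-2 * t / θ))

lemma hasDerivAt_standardizedGap (c : ℝ) {θ t : ℝ} (hθ : 0 < θ) (ht : 0 < t) :
    HasDerivAt (standardizedGap c θ)
      (-(c / θ) * (exp (-t / θ) / (1 - exp (-2 * t / θ)) ^ ((3 : ℝ) / 2))) t := by
  have hq := one_sub_exp_neg_two_mul_div_pos hθ ht
  have hE : HasDerivAt (fun t => exp (-t / θ)) (exp (-t / θ) * (-1 / θ)) t :=
    (((hasDerivAt_id t).neg).div_const θ).exp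
  have hQ : HasDerivAt (fun t => 1 - exp (-2 * t / θ)) (-(exp (-2 * t / θ) * (-2 / θ))) t := by
    simpa using ((((hasDerivAt_id t).const_mul (-2)).div_const θ).exp).const_sub 1
  refine ((hE.const_mul c).div (hQ.sqrt hq.ne') (sqrt_pos.2 hq).ne').congr_deriv ?_
  rw [rpow_three_halves_eq_mul_sqrt hq.le]
  generalize exp (-2 * t / θ) = q at hq ⊢
  have hr := sq_sqrt hq.le
  field_simp
  rw [hr]
  ring

section standardizedGap

variable {c θ : ℝ}

lemma standardizedGap_pos (hc : 0 < c) (hθ : 0 < θ) {t : ℝ} (ht : 0 < t) :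
    0 < standardizedGap c θ t :=
  div_pos (mul_pos hc (exp_pos _)) (sqrt_pos.2 (one_sub_exp_neg_two_mul_div_pos hθ ht))

lemma injOn_standardizedGap (hc : 0 < c) (hθ : 0 < θ) :
    InjOn (standardizedGap c θ) (Ioi 0) := by
  refine (strictAntiOn_of_deriv_neg (convex_Ioi 0)
    (fun t ht => (hasDerivAt_standardizedGap c hθ ht).continuousAt.continuousWithinAt)
    fun t ht => ?_).injOn
  rw [interior_Ioi] at ht
  have hq := one_sub_exp_neg_two_mul_div_pos hθ ht
  rw [(hasDerivAt_standardizedGap c hθ ht).deriv, neg_mul, neg_lt_zero]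
  positivity

lemma standardizedGap_image_Ioi (hc : 0 < c) (hθ : 0 < θ) :
    standardizedGap c θ '' Ioi 0 = Ioi 0 := by
  refine Subset.antisymm (image_subset_iff.2 fun t ht => standardizedGap_pos hc hθ ht) ?_
  intro y (hy : 0 < y)
  -- `y` is attained where `exp (-t / θ) = y / √(c ^ 2 + y ^ 2)`
  set R := √(c ^ 2 + y ^ 2)
  have hR : 0 < R := sqrt_pos.2 (by positivity)
  have hR2 : R ^ 2 = c ^ 2 + y ^ 2 := sq_sqrt (by positivity)
  have hyR : y / R < 1 := (div_lt_one hR).2 (lt_sqrt_of_sq_lt (by nlinarith))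
  refine ⟨-θ * log (y / R),
    mul_pos_of_neg_of_neg (neg_neg_of_pos hθ) (log_neg (by positivity) hyR), ?_⟩
  have hE : exp (-(-θ * log (y / R)) / θ) = y / R := by
    rw [show -(-θ * log (y / R)) / θ = log (y / R) by field_simp, exp_log (by positivity)]
  have h1 : 1 - (y / R) ^ 2 = (c / R) ^ 2 := by
    field_simp
    linarith
  rw [standardizedGap, exp_neg_two_mul_div, hE, h1, sqrt_sq (by positivity)]
  field_simp

end standardizedGap

lemma fptDensityMuTheta_eq_mul_gaussian {θ σ : ℝ} (μ x₀ : ℝ) (hθ : 0 < θ) (hσ : σ ≠ 0) {t : ℝ}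
    (ht : 0 < t) :
    let c := (μ * θ - x₀) / (σ * √θ)
    fptDensityMuTheta θ σ μ x₀ t =
      c / θ * (exp (-t / θ) / (1 - exp (-2 * t / θ)) ^ ((3 : ℝ) / 2)) *
        (2 / √π * exp (-standardizedGap c θ t ^ 2)) := by
  intro c
  have hsθ : 0 < √θ := sqrt_pos.2 hθ
  have hq := one_sub_exp_neg_two_mul_div_pos hθ ht
  have hgap : standardizedGap c θ t ^ 2 =
      (x₀ - μ * θ) ^ 2 * exp (-2 * t / θ) / (σ ^ 2 * θ * (1 - exp (-2 * t / θ))) := by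
    rw [standardizedGap, div_pow, mul_pow, ← exp_neg_two_mul_div, sq_sqrt hq.le]
    simp only [c, div_pow, mul_pow, sq_sqrt hθ.le]
    field_simp
    ring
  rw [fptDensityMuTheta, hgap, rpow_three_halves_eq_mul_sqrt hθ.le]
  simp only [c]
  field_simp

theorem fptDensityMuTheta_is_pdf (θ σ μ x₀ : ℝ) (hθ : 0 < θ) (hσ : 0 < σ)
    (hx : x₀ < μ * θ) :
    (∀ t ∈ Set.Ioi (0 : ℝ), 0 ≤ fptDensityMuTheta θ σ μ x₀ t) ∧
      ∫ t in Set.Ioi (0 : ℝ), fptDensityMuTheta θ σ μ x₀ t = 1 := by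
  set c := (μ * θ - x₀) / (σ * √θ)
  have hc : 0 < c := div_pos (by linarith) (by positivity)
  set s := standardizedGap c θ
  have hs' : ∀ t ∈ Ioi (0 : ℝ), HasDerivAt s (deriv s t) t := fun t ht =>
    (hasDerivAt_standardizedGap c hθ ht).differentiableAt.hasDerivAt
  have hdensity : ∀ t ∈ Ioi (0 : ℝ),
      fptDensityMuTheta θ σ μ x₀ t = |deriv s t| • (2 / √π * exp (-s t ^ 2)) := by
    intro t (ht : 0 < t)
    have hq := one_sub_exp_neg_two_mul_div_pos hθ ht
    rw [(hasDerivAt_standardizedGap c hθ ht).deriv, neg_mul, abs_neg,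
      abs_of_pos (by positivity), smul_eq_mul]
    exact fptDensityMuTheta_eq_mul_gaussian μ x₀ hθ hσ.ne' ht
  refine ⟨fun t ht => hdensity t ht ▸ by positivity, ?_⟩
  calc ∫ t in Ioi 0, fptDensityMuTheta θ σ μ x₀ t
      = ∫ t in Ioi 0, |deriv s t| • (2 / √π * exp (-s t ^ 2)) :=
        setIntegral_congr_fun measurableSet_Ioi hdensity
    _ = ∫ y in s '' Ioi 0, 2 / √π * exp (-y ^ 2) :=
        (integral_image_eq_integral_abs_deriv_smul measurableSet_Ioi
          (fun t ht => (hs' t ht).hasDerivWithinAt) (injOn_standardizedGap hc hθ)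
          fun y => 2 / √π * exp (-y ^ 2)).symm
    _ = 1 := by
      rw [standardizedGap_image_Ioi hc hθ, integral_Ioi_two_div_sqrt_pi_mul_exp_neg_sq]
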